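/- Suppose x ∈ Δ_N is an (N,1/N)-minimizer such that (i) for some k ∈ [2−N:0] one has x_k ≥ x_{k+1} ≥ … ≥ x_0 ≥ 1/N, and (ii) if k ≥ 3−N then x_{1−N} = … = x_{k−2} = 0 (no restriction on x_{k−1}). Then Φ_N = T_N*(1/N). -/

import Mathlib

open Finset Filter Topology
open scoped ENNReal

/-- Interval average `a_{[a:b]}(x) = (x_a + … + x_b)/(b-a+1)`. -/
noncomputable def iavg (x : ℤ → ℝ) (a b : ℤ) : ℝ :=
  (∑ j ∈ Finset.Icc a b, x j) / ((b - a + 1 : ℤ) : ℝ)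

/-- Maximal forward average `m_i^+(x) = sup_{r ≥ 1} a_{[i+1 : i+r]}(x)`
(cyclic problem). -/
noncomputable def mplus (x : ℤ → ℝ) (i : ℤ) : ℝ :=
  sSup {a : ℝ | ∃ r : ℕ, 1 ≤ r ∧ a = iavg x (i + 1) (i + (r : ℤ))}

/-- The cyclic sum `S_n^max(x) = Σ_{i=1}^n x_i / m_i^+(x)`, valued in `ℝ≥0∞`
(a term with `x_i = 0` is `0`). -/
noncomputable def SmaxE (n : ℕ) (x : ℤ → ℝ) : ℝ≥0∞ :=
  ∑ i ∈ Finset.Icc (1 : ℤ) (n : ℤ), ENNReal.ofReal (x i) / ENNReal.ofReal (mplus x i)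

/-- `Φ_n`: infimum of `S_n^max(x)` over nonnegative `n`-periodic `x ≠ 0`. -/
noncomputable def PhiE (n : ℕ) : ℝ≥0∞ :=
  sInf {t : ℝ≥0∞ | ∃ x : ℤ → ℝ, (∀ i, 0 ≤ x i) ∧ (∀ i, x (i + (n : ℤ)) = x i) ∧
    (∃ i, x i ≠ 0) ∧ t = SmaxE n x}

/-- Non-cyclic maximal forward average for `i < 0`:
`m_i^+(x) = max_{1 ≤ r ≤ −i} (x_{i+1} + … + x_{i+r})/r`. -/
noncomputable def mNeg (x : ℤ → ℝ) (i : ℤ) : ℝ :=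
  sSup {a : ℝ | ∃ r : ℤ, 1 ≤ r ∧ r ≤ -i ∧
    a = (∑ j ∈ Finset.Icc (i + 1) (i + r), x j) / (r : ℝ)}

/-- `T(x,p) = Σ_{i ≤ −1} x_i/m_i^+(x) + x_0/p`, valued in `ℝ≥0∞`: a term with
`x_i = 0` is `0`, and the value is `+∞` if `x_i > 0` and `m_i^+(x) = 0` for
some `i ≤ −1`. -/
noncomputable def Tval (x : ℤ → ℝ) (p : ℝ) : ℝ≥0∞ :=
  (∑' i : {z : ℤ // z ≤ -1}, ENNReal.ofReal (x i) / ENNReal.ofReal (mNeg x i)) +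
    ENNReal.ofReal (x 0) / ENNReal.ofReal p

/-- `Δ_N`: sequences `(x_i)_{i ≤ 0}` of nonnegative reals with `x_i = 0` for
`i ≤ -N` and `x_{1−N} + … + x_0 = 1` (encoded as functions on `ℤ` vanishing
at positive indices). -/
def Delta (N : ℕ) : Set (ℤ → ℝ) :=
  {x | (∀ i, 0 ≤ x i) ∧ (∀ i : ℤ, i ≤ -(N : ℤ) → x i = 0) ∧
    (∀ i : ℤ, 0 < i → x i = 0) ∧ ∑ i ∈ Finset.Icc (1 - (N : ℤ)) 0, x i = 1}

/-- `T_N*(p) = inf_{x ∈ Δ_N} T(x,p)`. -/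
noncomputable def Tstar (N : ℕ) (p : ℝ) : ℝ≥0∞ :=
  sInf {t : ℝ≥0∞ | ∃ x ∈ Delta N, t = Tval x p}





section Helpers
variable {M : Type*} [AddCommMonoid M]

lemma sum_IocZ (f : ℤ → M) {a b c : ℤ} (h1 : a ≤ b) (h2 : b ≤ c) :
    ∑ i ∈ Finset.Ioc a b, f i + ∑ i ∈ Finset.Ioc b c, f i = ∑ i ∈ Finset.Ioc a c, f i := by
  rw [← Finset.sum_union (by rw [Finset.disjoint_left]; intro t ht ht'; simp at ht ht'; omega),
    Finset.Ioc_union_Ioc_eq_Ioc h1 h2]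

lemma IocZ_singleton (b : ℤ) : Finset.Ioc b (b+1) = {b+1} := by
  ext t; simp; omega

lemma window_step (h : ℤ → M) (N : ℕ) (hper : ∀ i, h (i + (N:ℤ)) = h i) (a : ℤ) :
    ∑ i ∈ Finset.Ioc a (a + (N:ℤ)), h i = ∑ i ∈ Finset.Ioc (a+1) (a + 1 + (N:ℤ)), h i := by
  rcases Nat.eq_zero_or_pos N with h0 | h0
  · simp [h0]
  · have h1 : (1:ℤ) ≤ N := by exact_mod_cast h0
    have e1 := sum_IocZ h (a := a) (b := a+1) (c := a + (N:ℤ)) (by omega) (by omega)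
    have e2 := sum_IocZ h (a := a+1) (b := a + (N:ℤ)) (c := a + 1 + (N:ℤ)) (by omega) (by omega)
    rw [IocZ_singleton, Finset.sum_singleton] at e1
    have e3 : Finset.Ioc (a + (N:ℤ)) (a + 1 + (N:ℤ)) = {a + 1 + (N:ℤ)} := by
      have : a + 1 + (N:ℤ) = (a + (N:ℤ)) + 1 := by ring
      rw [this, IocZ_singleton]
    rw [e3, Finset.sum_singleton, hper (a+1)] at e2
    rw [← e1, ← e2, add_comm]

lemma window_sum (h : ℤ → M) (N : ℕ) (hper : ∀ i, h (i + (N:ℤ)) = h i) (a : ℤ) :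
    ∑ i ∈ Finset.Ioc a (a + (N:ℤ)), h i = ∑ i ∈ Finset.Ioc 0 (N:ℤ), h i := by
  induction a using Int.induction_on with
  | zero => simp
  | succ k ih => rw [← window_step h N hper k]; exact ih
  | pred k ih =>
      have := window_step h N hper (-(k+1))
      have e : (-(k+1) : ℤ) + 1 = -k := by ring
      rw [e] at this
      rw [← this] at ih
      convert ih using 3 <;> push_cast <;> ring

lemma per_mul (h : ℤ → M) (N : ℕ) (hper : ∀ i, h (i + (N:ℤ)) = h i) :
    ∀ (m : ℤ) (t : ℤ), h (t + m * (N:ℤ)) = h t := by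
  intro m
  induction m using Int.induction_on with
  | zero => simp
  | succ k ih => intro t
                 have : t + (k+1) * (N:ℤ) = (t + k * N) + N := by ring
                 rw [this, hper, ih]
  | pred k ih => intro t
                 have : t + (-(k+1)) * (N:ℤ) + (N:ℤ) = t + (-k) * N := by ring
                 have h2 := hper (t + (-(k+1)) * (N:ℤ))
                 rw [this] at h2
                 have e : (t + (-↑k - 1) * (N:ℤ)) = t + (-((k:ℤ)+1)) * (N:ℤ) := by ring
                 rw [e, ← h2, ih]

end Helpers

section MLem
variable (y : ℤ → ℝ)

lemma IccZ_succ_left (a b : ℤ) : Finset.Icc (a+1) b = Finset.Ioc a b := by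
  ext t; simp [Int.add_one_le_iff]

lemma sum_shiftZ {M : Type*} [AddCommMonoid M] (f : ℤ → M) (a b c : ℤ) :
    ∑ j ∈ Finset.Ioc (a + c) (b + c), f j = ∑ j ∈ Finset.Ioc a b, f (j + c) := by
  rw [← Finset.map_add_right_Ioc, Finset.sum_map]
  rfl

lemma iavg_eq (i : ℤ) (r : ℕ) (hr : 1 ≤ r) :
    iavg y (i + 1) (i + (r : ℤ)) = (∑ j ∈ Finset.Ioc i (i + (r : ℤ)), y j) / (r : ℝ) := by
  unfold iavg
  rw [show i + 1 = i + 1 from rfl, IccZ_succ_left]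
  congr 1
  have : (i + (r:ℤ) - (i + 1) + 1) = (r : ℤ) := by ring
  rw [this]
  norm_cast

lemma iavg_le (C : ℝ) (hC : ∀ t, y t ≤ C) (i : ℤ) (r : ℕ) (hr : 1 ≤ r) :
    iavg y (i + 1) (i + (r : ℤ)) ≤ C := by
  rw [iavg_eq y i r hr]
  have hcard : (Finset.Ioc i (i + (r : ℤ))).card = r := by
    rw [Int.card_Ioc]; simp
  have hsum : ∑ j ∈ Finset.Ioc i (i + (r : ℤ)), y j ≤ (r : ℝ) * C := by
    calc ∑ j ∈ Finset.Ioc i (i + (r : ℤ)), y j ≤ (Finset.Ioc i (i + (r : ℤ))).card • C :=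
          Finset.sum_le_card_nsmul _ _ _ (fun t _ => hC t)
      _ = (r : ℝ) * C := by rw [hcard]; simp [nsmul_eq_mul]
  have hrpos : (0:ℝ) < r := by exact_mod_cast hr
  rw [div_le_iff₀ hrpos]
  linarith [hsum]

lemma mplus_bdd (C : ℝ) (hC : ∀ t, y t ≤ C) (i : ℤ) :
    BddAbove {a : ℝ | ∃ r : ℕ, 1 ≤ r ∧ a = iavg y (i + 1) (i + (r : ℤ))} := by
  refine ⟨C, fun a ha => ?_⟩
  obtain ⟨r, hr, rfl⟩ := ha
  exact iavg_le y C hC i r hr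

lemma le_mplus (C : ℝ) (hC : ∀ t, y t ≤ C) (i : ℤ) (r : ℕ) (hr : 1 ≤ r) :
    iavg y (i + 1) (i + (r : ℤ)) ≤ mplus y i :=
  le_csSup (mplus_bdd y C hC i) ⟨r, hr, rfl⟩

lemma mplus_le (i : ℤ) (c : ℝ)
    (h : ∀ r : ℕ, 1 ≤ r → iavg y (i + 1) (i + (r : ℤ)) ≤ c) : mplus y i ≤ c := by
  have hne : Set.Nonempty {a : ℝ | ∃ r : ℕ, 1 ≤ r ∧ a = iavg y (i + 1) (i + (r : ℤ))} :=
    ⟨iavg y (i + 1) (i + ((1:ℕ) : ℤ)), ⟨1, le_rfl, rfl⟩⟩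
  apply csSup_le hne
  rintro a ⟨r, hr, rfl⟩
  exact h r hr

lemma mplus_per (N : ℕ) (hper : ∀ i, y (i + (N:ℤ)) = y i) (i : ℤ) :
    mplus y (i + (N:ℤ)) = mplus y i := by
  unfold mplus
  congr 1
  ext a
  constructor <;> rintro ⟨r, hr, rfl⟩ <;> refine ⟨r, hr, ?_⟩ <;>
    rw [iavg_eq y _ r hr, iavg_eq y _ r hr] <;> congr 1
  · have e : i + (N:ℤ) + (r:ℤ) = (i + (r:ℤ)) + (N:ℤ) := by ring
    rw [e, sum_shiftZ]
    exact Finset.sum_congr rfl (fun j _ => hper j)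
  · have e : i + (N:ℤ) + (r:ℤ) = (i + (r:ℤ)) + (N:ℤ) := by ring
    rw [e, sum_shiftZ]
    exact Finset.sum_congr rfl (fun j _ => (hper j).symm)

end MLem







section MNegLem
variable (x : ℤ → ℝ)

lemma mNeg_bdd (i : ℤ) :
    BddAbove {a : ℝ | ∃ r : ℤ, 1 ≤ r ∧ r ≤ -i ∧
      a = (∑ j ∈ Finset.Icc (i + 1) (i + r), x j) / (r : ℝ)} := by
  have hsub : {a : ℝ | ∃ r : ℤ, 1 ≤ r ∧ r ≤ -i ∧
      a = (∑ j ∈ Finset.Icc (i + 1) (i + r), x j) / (r : ℝ)} ⊆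
      (fun r : ℤ => (∑ j ∈ Finset.Icc (i + 1) (i + r), x j) / (r : ℝ)) '' (Set.Icc 1 (-i)) := by
    rintro a ⟨r, h1, h2, rfl⟩
    exact ⟨r, ⟨h1, h2⟩, rfl⟩
  exact (((Set.finite_Icc _ _).image _).subset hsub).bddAbove

lemma le_mNeg (i r : ℤ) (h1 : 1 ≤ r) (h2 : r ≤ -i) :
    (∑ j ∈ Finset.Ioc i (i + r), x j) / (r : ℝ) ≤ mNeg x i := by
  apply le_csSup (mNeg_bdd x i)
  exact ⟨r, h1, h2, by rw [IccZ_succ_left]⟩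

lemma mNeg_le (i : ℤ) (hi : i ≤ -1) (c : ℝ)
    (h : ∀ r : ℤ, 1 ≤ r → r ≤ -i → (∑ j ∈ Finset.Ioc i (i + r), x j) / (r : ℝ) ≤ c) :
    mNeg x i ≤ c := by
  have hne : Set.Nonempty {a : ℝ | ∃ r : ℤ, 1 ≤ r ∧ r ≤ -i ∧
      a = (∑ j ∈ Finset.Icc (i + 1) (i + r), x j) / (r : ℝ)} :=
    ⟨_, ⟨1, le_rfl, by omega, rfl⟩⟩
  apply csSup_le hne
  rintro a ⟨r, h1, h2, rfl⟩
  rw [IccZ_succ_left]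
  exact h r h1 h2

end MNegLem

lemma delta_le_one {N : ℕ} {x : ℤ → ℝ} (hx : x ∈ Delta N) : ∀ j, x j ≤ 1 := by
  obtain ⟨h0, hneg, hpos, hsum⟩ := hx
  intro j
  by_cases hj : j ∈ Finset.Icc (1 - (N : ℤ)) 0
  · calc x j ≤ ∑ i ∈ Finset.Icc (1 - (N : ℤ)) 0, x i :=
        Finset.single_le_sum (fun t _ => h0 t) hj
      _ = 1 := hsum
  · simp only [Finset.mem_Icc, not_and_or, not_le] at hj
    rcases hj with hj | hj
    · rw [hneg j (by omega)]; norm_num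
    · rw [hpos j (by omega)]; norm_num

lemma phi_le_tval {N : ℕ} (hN : 1 ≤ N) {x : ℤ → ℝ} (hx : x ∈ Delta N) :
    PhiE N ≤ Tval x (1 / (N : ℝ)) := by
  obtain ⟨h0, hneg, hpos, hsum⟩ := hx
  have hxle1 : ∀ j, x j ≤ 1 := delta_le_one ⟨h0, hneg, hpos, hsum⟩
  set y : ℤ → ℝ := fun i => x ((i + N - 1) % N + 1 - N) with hy
  have hNpos : (0:ℤ) < (N:ℤ) := by exact_mod_cast hN
  have hyx : ∀ i : ℤ, 1 - (N:ℤ) ≤ i → i ≤ 0 → y i = x i := by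
    intro i h1 h2
    have : (i + N - 1) % N = i + N - 1 := Int.emod_eq_of_lt (by omega) (by omega)
    simp only [hy, this]
    congr 1
    omega
  have hyper : ∀ i, y (i + (N:ℤ)) = y i := by
    intro i
    simp only [hy]
    congr 2
    have e : i + (N:ℤ) + N - 1 = (i + N - 1) + N * 1 := by ring
    rw [e, Int.add_mul_emod_self_left]
  have hy0 : ∀ i, 0 ≤ y i := fun i => h0 _
  have hy1 : ∀ t, y t ≤ 1 := fun t => hxle1 _
  -- nonzero witness
  have hex : ∃ j ∈ Finset.Icc (1 - (N:ℤ)) 0, x j ≠ 0 := by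
    apply Finset.exists_ne_zero_of_sum_ne_zero
    rw [hsum]; norm_num
  obtain ⟨j₀, hj₀, hj₀ne⟩ := hex
  simp only [Finset.mem_Icc] at hj₀
  have hyne : ∃ i, y i ≠ 0 := ⟨j₀, by rw [hyx j₀ hj₀.1 hj₀.2]; exact hj₀ne⟩
  -- PhiE ≤ SmaxE N y
  have h1 : PhiE N ≤ SmaxE N y := sInf_le ⟨y, hy0, hyper, hyne, rfl⟩
  refine h1.trans ?_
  -- rewrite SmaxE as window sum
  set H : ℤ → ℝ≥0∞ := fun i => ENNReal.ofReal (y i) / ENNReal.ofReal (mplus y i) with hH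
  have hHper : ∀ i, H (i + (N:ℤ)) = H i := by
    intro i
    simp only [hH, hyper i, mplus_per y N hyper i]
  have hwin : SmaxE N y = ∑ i ∈ Finset.Ioc (-(N:ℤ)) 0, H i := by
    have e0 : (-(N:ℤ)) + (N:ℤ) = 0 := by ring
    have := window_sum H N hHper (-(N:ℤ))
    rw [e0] at this
    rw [SmaxE, show (1:ℤ) = 0 + 1 from rfl, IccZ_succ_left, ← this]
  rw [hwin]
  -- split off i = 0
  have hsplit : ∑ i ∈ Finset.Ioc (-(N:ℤ)) 0, H i
      = ∑ i ∈ Finset.Ioc (-(N:ℤ)) (-1), H i + H 0 := by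
    rw [← sum_IocZ H (a := -(N:ℤ)) (b := -1) (c := 0) (by omega) (by omega)]
    congr 1
    rw [show (0:ℤ) = -1 + 1 from rfl, IocZ_singleton, Finset.sum_singleton]
  rw [hsplit, Tval]
  apply add_le_add
  · -- negative part
    have hterm : ∀ i ∈ Finset.Ioc (-(N:ℤ)) (-1),
        H i ≤ ENNReal.ofReal (x i) / ENNReal.ofReal (mNeg x i) := by
      intro i hi
      simp only [Finset.mem_Ioc] at hi
      have hyi : y i = x i := hyx i (by omega) (by omega)
      have hm : mNeg x i ≤ mplus y i := by
        apply mNeg_le x i hi.2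
        intro r h1r h2r
        have hr' : ((r.toNat : ℤ)) = r := Int.toNat_of_nonneg (by omega)
        have hsums : ∑ j ∈ Finset.Ioc i (i + r), x j = ∑ j ∈ Finset.Ioc i (i + r), y j := by
          apply Finset.sum_congr rfl
          intro j hj
          simp only [Finset.mem_Ioc] at hj
          exact (hyx j (by omega) (by omega)).symm
        have := le_mplus y 1 hy1 i r.toNat (by omega)
        rw [iavg_eq y i r.toNat (by omega), hr'] at this
        rw [hsums]
        calc (∑ j ∈ Finset.Ioc i (i + r), y j) / (r : ℝ)
            = (∑ j ∈ Finset.Ioc i (i + r), y j) / ((r.toNat : ℕ) : ℝ) := by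
              rw [show ((r.toNat : ℕ) : ℝ) = ((r.toNat : ℤ) : ℝ) by push_cast; ring, hr']
          _ ≤ mplus y i := this
      simp only [hH, hyi]
      exact ENNReal.div_le_div le_rfl (ENNReal.ofReal_le_ofReal hm)
    calc ∑ i ∈ Finset.Ioc (-(N:ℤ)) (-1), H i
        ≤ ∑ i ∈ Finset.Ioc (-(N:ℤ)) (-1),
            ENNReal.ofReal (x i) / ENNReal.ofReal (mNeg x i) := Finset.sum_le_sum hterm
      _ ≤ ∑' i : {z : ℤ // z ≤ -1}, ENNReal.ofReal (x i) / ENNReal.ofReal (mNeg x i) := by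
          have heq : ∑ i ∈ (Finset.Ioc (-(N:ℤ)) (-1)).subtype (fun z => z ≤ -1),
                  ENNReal.ofReal (x i.1) / ENNReal.ofReal (mNeg x i.1)
              = ∑ i ∈ Finset.Ioc (-(N:ℤ)) (-1),
              ENNReal.ofReal (x i) / ENNReal.ofReal (mNeg x i) := by
            exact Finset.sum_subtype_of_mem
              (fun i => ENNReal.ofReal (x i) / ENNReal.ofReal (mNeg x i))
              (fun t ht => (Finset.mem_Ioc.mp ht).2)
          rw [← heq]
          exact ENNReal.sum_le_tsum _
  · -- term at 0
    have hmean : (1 : ℝ) / N ≤ mplus y 0 := by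
      have hsum0 : ∑ j ∈ Finset.Ioc (0:ℤ) ((N:ℕ):ℤ), y j = 1 := by
        have e0 : (-(N:ℤ)) + (N:ℤ) = 0 := by ring
        have hw := window_sum y N hyper (-(N:ℤ))
        rw [e0] at hw
        rw [← hw]
        rw [show (-(N:ℤ)) = (1 - (N:ℤ)) - 1 by ring]
        rw [← IccZ_succ_left, show (1 - (N:ℤ)) - 1 + 1 = 1 - (N:ℤ) by ring]
        rw [← hsum]
        apply Finset.sum_congr rfl
        intro j hj
        simp only [Finset.mem_Icc] at hj
        exact hyx j hj.1 hj.2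
      have := le_mplus y 1 hy1 0 N hN
      rw [iavg_eq y 0 N hN] at this
      rw [zero_add] at this
      rw [hsum0] at this
      exact_mod_cast this
    have hy00 : y 0 = x 0 := hyx 0 (by omega) le_rfl
    simp only [hH, hy00]
    exact ENNReal.div_le_div le_rfl (ENNReal.ofReal_le_ofReal hmean)


section Cut
variable (N : ℕ) (y : ℤ → ℝ)

lemma exists_good_cut (hN : 1 ≤ N) (hyper : ∀ i, y (i + (N:ℤ)) = y i) :
    ∃ i₀ : ℤ, 1 ≤ i₀ ∧ i₀ ≤ (N:ℤ) ∧
      (∀ j : ℤ, 1 - (N:ℤ) ≤ j → j ≤ -1 →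
        ((-j : ℤ):ℝ) * (∑ i ∈ Finset.Ioc (0:ℤ) (N:ℤ), y i) / N
          ≤ ∑ t ∈ Finset.Ioc (i₀+j) i₀, y t) ∧
      (∀ r : ℕ, ∑ t ∈ Finset.Ioc i₀ (i₀ + (r:ℤ)), y t
          ≤ (r:ℝ) * (∑ i ∈ Finset.Ioc (0:ℤ) (N:ℤ), y i) / N) := by
  set s : ℝ := ∑ i ∈ Finset.Ioc (0:ℤ) (N:ℤ), y i with hs
  have hNR : (0:ℝ) < (N:ℝ) := by exact_mod_cast hN
  have hwin : ∀ a : ℤ, ∑ i ∈ Finset.Ioc a (a + (N:ℤ)), y i = s :=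
    fun a => window_sum y N hyper a
  set F : ℤ → ℝ := fun t => (∑ j ∈ Finset.Ioc (-(N:ℤ)) t, y j) - (t:ℝ) * s / N with hF
  have hFdiff : ∀ a b : ℤ, -(N:ℤ) ≤ a → a ≤ b →
      ∑ t ∈ Finset.Ioc a b, y t = F b - F a + ((b:ℝ) - (a:ℝ)) * s / N := by
    intro a b h1 h2
    have h3 := sum_IocZ y (a := -(N:ℤ)) (b := a) (c := b) h1 h2
    simp only [hF]
    have : ((b:ℝ)) * s / N - ((a:ℝ)) * s / N = ((b:ℝ) - (a:ℝ)) * s / N := by ring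
    linarith [h3, this]
  clear_value s F
  have hFper : ∀ t : ℤ, -(N:ℤ) ≤ t → F (t + (N:ℤ)) = F t := by
    intro t ht
    have h1 := hFdiff t (t + N) ht (by omega)
    rw [hwin t] at h1
    have hcast : ((t + (N:ℤ) : ℤ) : ℝ) - (t:ℝ) = (N:ℝ) := by push_cast; ring
    rw [hcast] at h1
    have h2 : (N:ℝ) * s / N = s := by field_simp
    rw [h2] at h1
    linarith [h1]
  obtain ⟨i₀, hi₀mem, hi₀max⟩ := Finset.exists_max_image (Finset.Icc (1:ℤ) (N:ℤ)) F
    ⟨1, by simp; omega⟩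
  simp only [Finset.mem_Icc] at hi₀mem
  have hFmax1 : ∀ t : ℤ, 0 ≤ t → t ≤ (N:ℤ) → F t ≤ F i₀ := by
    intro t h1 h2
    rcases eq_or_lt_of_le h1 with h1 | h1
    · rw [← h1, ← hFper 0 (by omega)]
      apply hi₀max
      simp only [Finset.mem_Icc]
      omega
    · exact hi₀max t (by simp only [Finset.mem_Icc]; omega)
  have hFmax : ∀ t : ℤ, -(N:ℤ) ≤ t → t ≤ 2 * (N:ℤ) → F t ≤ F i₀ := by
    intro t h1 h2
    rcases le_or_gt t (-1) with h3 | h3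
    · rw [← hFper t h1]; exact hFmax1 (t + N) (by omega) (by omega)
    rcases le_or_gt t (N:ℤ) with h4 | h4
    · exact hFmax1 t (by omega) h4
    · have := hFper (t - N) (by omega)
      rw [show t - (N:ℤ) + (N:ℤ) = t by ring] at this
      rw [this]
      exact hFmax1 (t - N) (by omega) (by omega)
  refine ⟨i₀, hi₀mem.1, hi₀mem.2, ?_, ?_⟩
  · intro j hj1 hj2
    have hd := hFdiff (i₀ + j) i₀ (by omega) (by omega)
    have hm := hFmax (i₀ + j) (by omega) (by omega)
    rw [hd]
    have hcast : ((i₀:ℝ) - ((i₀ + j : ℤ):ℝ)) = ((-j : ℤ) : ℝ) := by push_cast; ring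
    rw [hcast]
    nlinarith [hm]
  · -- P2ext
    have P2 : ∀ r : ℤ, 1 ≤ r → r ≤ (N:ℤ) →
        ∑ t ∈ Finset.Ioc i₀ (i₀ + r), y t ≤ (r:ℝ) * s / N := by
      intro r h1 h2
      have hd := hFdiff i₀ (i₀ + r) (by omega) (by omega)
      have hm := hFmax (i₀ + r) (by omega) (by omega)
      rw [hd]
      have hcast : (((i₀ + r : ℤ):ℝ) - (i₀:ℝ)) = (r:ℝ) := by push_cast; ring
      rw [hcast]
      nlinarith [hm]
    intro r
    induction r using Nat.strong_induction_on with
    | _ r ih =>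
      rcases Nat.eq_zero_or_pos r with h0 | h0
      · subst h0; simp
      rcases le_or_gt r N with hrN | hrN
      · have := P2 (r : ℤ) (by exact_mod_cast h0) (by exact_mod_cast hrN)
        convert this using 3
        norm_cast
      · have hlt : r - N < r := by omega
        have ih1 := ih (r - N) hlt
        have hsplit := sum_IocZ y (a := i₀) (b := i₀ + ((r - N : ℕ) : ℤ))
          (c := i₀ + (r:ℤ)) (by omega) (by push_cast; omega)
        have hw : ∑ t ∈ Finset.Ioc (i₀ + ((r - N : ℕ) : ℤ)) (i₀ + (r:ℤ)), y t = s := by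
          have := hwin (i₀ + ((r - N : ℕ) : ℤ))
          rw [show i₀ + ((r - N : ℕ) : ℤ) + (N:ℤ) = i₀ + (r:ℤ) by push_cast; omega] at this
          exact this
        have hcast : ((r - N : ℕ) : ℝ) = (r:ℝ) - (N:ℝ) := by
          push_cast [Nat.cast_sub (le_of_lt hrN)]; ring
        rw [← hsplit, hw]
        rw [hcast] at ih1
        have : ((r:ℝ) - (N:ℝ)) * s / N + s = (r:ℝ) * s / N := by field_simp; ring
        linarith [ih1, this]

end Cut

section Term
variable (N : ℕ) (y : ℤ → ℝ) (s : ℝ) (i₀ : ℤ) (z : ℤ → ℝ)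

lemma zsum_shift (hN : 1 ≤ N) (spos : 0 < s)
    (hzdef : ∀ t : ℤ, 1 - (N:ℤ) ≤ t → t ≤ 0 → z t = y (i₀ + t) / s)
    (a b : ℤ) (ha : 1 - (N:ℤ) ≤ a + 1) (hb : b ≤ 0) (hab : a ≤ b) :
    ∑ t ∈ Finset.Ioc a b, z t = (∑ t ∈ Finset.Ioc (i₀ + a) (i₀ + b), y t) / s := by
  have h1 : ∑ t ∈ Finset.Ioc a b, z t = ∑ t ∈ Finset.Ioc a b, y (i₀ + t) / s := by
    apply Finset.sum_congr rfl
    intro t ht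
    simp only [Finset.mem_Ioc] at ht
    exact hzdef t (by omega) (by omega)
  have h2 : ∑ t ∈ Finset.Ioc (i₀ + a) (i₀ + b), y t = ∑ t ∈ Finset.Ioc a b, y (i₀ + t) := by
    rw [show i₀ + a = a + i₀ by ring, show i₀ + b = b + i₀ by ring, sum_shiftZ]
    exact Finset.sum_congr rfl (fun t _ => by rw [add_comm])
  rw [h1, h2, Finset.sum_div]

lemma term_neg (hN : 1 ≤ N) (hy0 : ∀ i, 0 ≤ y i) (spos : 0 < s) (hyC : ∀ t, y t ≤ s)
    (hwin : ∀ a : ℤ, ∑ i ∈ Finset.Ioc a (a + (N:ℤ)), y i = s)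
    (hzdef : ∀ t : ℤ, 1 - (N:ℤ) ≤ t → t ≤ 0 → z t = y (i₀ + t) / s)
    (P1 : ∀ j : ℤ, 1 - (N:ℤ) ≤ j → j ≤ -1 →
      ((-j : ℤ):ℝ) * s / N ≤ ∑ t ∈ Finset.Ioc (i₀+j) i₀, y t)
    (P2ext : ∀ r : ℕ, ∑ t ∈ Finset.Ioc i₀ (i₀ + (r:ℤ)), y t ≤ (r:ℝ) * s / N)
    (j : ℤ) (hj1 : 1 - (N:ℤ) ≤ j) (hj2 : j ≤ -1) :
    ENNReal.ofReal (z j) / ENNReal.ofReal (mNeg z j) ≤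
      ENNReal.ofReal (y (i₀ + j)) / ENNReal.ofReal (mplus y (i₀ + j)) := by
  have hNR : (0:ℝ) < (N:ℝ) := by exact_mod_cast hN
  have hzj : z j = y (i₀ + j) / s := hzdef j hj1 (by omega)
  rcases eq_or_lt_of_le (hy0 (i₀ + j)) with hyi | hyi
  · rw [hzj, ← hyi]
    simp
  -- positive case
  have hjR : (1:ℝ) ≤ ((-j : ℤ):ℝ) := by exact_mod_cast (by omega : (1:ℤ) ≤ -j)
  have hA := P1 j hj1 hj2
  set A : ℝ := ∑ t ∈ Finset.Ioc (i₀ + j) i₀, y t with hAdef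
  clear_value A
  have hApos : 0 < A := lt_of_lt_of_le (by positivity) hA
  -- mNeg z j lower bound
  have hmNeg1 : A / s / ((-j : ℤ):ℝ) ≤ mNeg z j := by
    have hel := le_mNeg z j (-j) (by omega) (by omega)
    rw [show j + -j = (0:ℤ) by ring] at hel
    rw [zsum_shift N y s i₀ z hN spos hzdef j 0 (by omega) le_rfl (by omega)] at hel
    rw [show i₀ + (0:ℤ) = i₀ by ring] at hel
    rw [hAdef]
    exact_mod_cast hel
  have hmNegpos : 0 < mNeg z j :=
    lt_of_lt_of_le (by positivity) hmNeg1
  -- key : mplus ≤ s * mNeg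
  have key : mplus y (i₀ + j) ≤ s * mNeg z j := by
    apply mplus_le
    intro r hr
    rw [iavg_eq y (i₀ + j) r hr]
    have hrR : (0:ℝ) < (r:ℝ) := by exact_mod_cast hr
    rcases le_or_gt ((r:ℤ)) (-j) with hcase | hcase
    · -- short window
      have hel := le_mNeg z j (r:ℤ) (by exact_mod_cast hr) hcase
      rw [zsum_shift N y s i₀ z hN spos hzdef j (j + r) (by omega) (by omega) (by omega)] at hel
      rw [show i₀ + (j + (r:ℤ)) = i₀ + j + (r:ℤ) by ring] at hel
      have : (∑ t ∈ Finset.Ioc (i₀ + j) (i₀ + j + (r:ℤ)), y t) / (r:ℝ)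
          = s * ((∑ t ∈ Finset.Ioc (i₀ + j) (i₀ + j + (r:ℤ)), y t) / s / (((r:ℤ)):ℝ)) := by
        field_simp
        push_cast
        ring
      rw [this]
      exact mul_le_mul_of_nonneg_left hel (le_of_lt spos)
    · -- long window: split at i₀
      set B : ℝ := ∑ t ∈ Finset.Ioc i₀ (i₀ + j + (r:ℤ)), y t with hBdef
      clear_value B
      have hsplit : A + B = ∑ t ∈ Finset.Ioc (i₀ + j) (i₀ + j + (r:ℤ)), y t := by
        rw [hAdef, hBdef]
        exact sum_IocZ y (by omega) (by omega)
      have hB : B ≤ ((r:ℝ) + (j:ℝ)) * s / N := by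
        have hrj : (((((r:ℤ) + j).toNat : ℕ)) : ℤ) = (r:ℤ) + j := Int.toNat_of_nonneg (by omega)
        have := P2ext ((r:ℤ) + j).toNat
        rw [hrj] at this
        rw [hBdef, show i₀ + j + (r:ℤ) = i₀ + ((r:ℤ) + j) by ring]
        calc ∑ t ∈ Finset.Ioc i₀ (i₀ + ((r:ℤ) + j)), y t
            ≤ ((((r:ℤ) + j).toNat : ℕ) : ℝ) * s / N := this
          _ = ((r:ℝ) + (j:ℝ)) * s / N := by
              rw [show ((((r:ℤ) + j).toNat : ℕ) : ℝ) = ((((((r:ℤ) + j).toNat : ℕ)) : ℤ) : ℝ)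
                by push_cast; ring, hrj]
              push_cast
              ring
      have hjrR : (1:ℝ) ≤ (r:ℝ) + (j:ℝ) := by
        have : (1:ℤ) ≤ (r:ℤ) + j := by omega
        exact_mod_cast this
      have hstep1 : (∑ t ∈ Finset.Ioc (i₀ + j) (i₀ + j + (r:ℤ)), y t) / (r:ℝ)
          ≤ A / ((-j : ℤ):ℝ) := by
        rw [← hsplit]
        rw [div_le_div_iff₀ hrR (by exact_mod_cast (by omega : (0:ℤ) < -j))]
        have hjcast : ((-j : ℤ):ℝ) = -(j:ℝ) := by push_cast; ring
        rw [hjcast]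
        have hA' : (-(j:ℝ)) * s / N ≤ A := by
          rw [← hjcast]; exact hA
        have h1 : (-(j:ℝ)) * B ≤ (-(j:ℝ)) * (((r:ℝ) + (j:ℝ)) * s / N) :=
          mul_le_mul_of_nonneg_left hB (by linarith)
        have h2 : ((r:ℝ) + (j:ℝ)) * ((-(j:ℝ)) * s / N) ≤ ((r:ℝ) + (j:ℝ)) * A :=
          mul_le_mul_of_nonneg_left hA' (by linarith)
        have h3 : (-(j:ℝ)) * (((r:ℝ) + (j:ℝ)) * s / N) = ((r:ℝ) + (j:ℝ)) * ((-(j:ℝ)) * s / N) := by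
          ring
        nlinarith [h1, h2, h3]
      have hstep2 : A / ((-j : ℤ):ℝ) ≤ s * mNeg z j := by
        have h5 := mul_le_mul_of_nonneg_left hmNeg1 (le_of_lt spos)
        have he : s * (A / s / ((-j : ℤ):ℝ)) = A / ((-j : ℤ):ℝ) := by
          rw [div_div, ← mul_div_assoc, mul_div_mul_left _ _ (ne_of_gt spos)]
        rw [← he]
        exact h5
      exact hstep1.trans hstep2
  -- finish in ENNReal
  have hpluspos : 0 < mplus y (i₀ + j) := by
    have hel := le_mplus y s hyC (i₀ + j) N hN
    rw [iavg_eq y (i₀ + j) N hN, hwin (i₀ + j)] at hel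
    calc (0:ℝ) < s / N := by positivity
      _ ≤ mplus y (i₀ + j) := hel
  rw [hzj, ← ENNReal.ofReal_div_of_pos hmNegpos, ← ENNReal.ofReal_div_of_pos hpluspos]
  apply ENNReal.ofReal_le_ofReal
  rw [div_le_div_iff₀ hmNegpos hpluspos]
  calc y (i₀ + j) / s * mplus y (i₀ + j)
      ≤ y (i₀ + j) / s * (s * mNeg z j) :=
        mul_le_mul_of_nonneg_left key (by positivity)
    _ = y (i₀ + j) * mNeg z j := by
        rw [← mul_assoc, div_mul_cancel₀ _ (ne_of_gt spos)]

lemma term_zero (hN : 1 ≤ N) (hy0 : ∀ i, 0 ≤ y i) (spos : 0 < s) (hyC : ∀ t, y t ≤ s)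
    (hwin : ∀ a : ℤ, ∑ i ∈ Finset.Ioc a (a + (N:ℤ)), y i = s)
    (hz0 : z 0 = y i₀ / s)
    (P2ext : ∀ r : ℕ, ∑ t ∈ Finset.Ioc i₀ (i₀ + (r:ℤ)), y t ≤ (r:ℝ) * s / N) :
    ENNReal.ofReal (z 0) / ENNReal.ofReal (1 / (N:ℝ)) ≤
      ENNReal.ofReal (y i₀) / ENNReal.ofReal (mplus y i₀) := by
  have hNR : (0:ℝ) < (N:ℝ) := by exact_mod_cast hN
  rcases eq_or_lt_of_le (hy0 i₀) with hyi | hyi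
  · rw [hz0, ← hyi]
    simp
  have hpluspos : 0 < mplus y i₀ := by
    have hel := le_mplus y s hyC i₀ N hN
    rw [iavg_eq y i₀ N hN, hwin i₀] at hel
    calc (0:ℝ) < s / N := by positivity
      _ ≤ mplus y i₀ := hel
  have hm0 : mplus y i₀ ≤ s / N := by
    apply mplus_le
    intro r hr
    rw [iavg_eq y i₀ r hr]
    have hrR : (0:ℝ) < (r:ℝ) := by exact_mod_cast hr
    have := P2ext r
    rw [div_le_iff₀ hrR]
    calc ∑ t ∈ Finset.Ioc i₀ (i₀ + (r:ℤ)), y t ≤ (r:ℝ) * s / N := this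
      _ = s / N * r := by ring
  have hNinv : (0:ℝ) < 1 / (N:ℝ) := by positivity
  rw [hz0, ← ENNReal.ofReal_div_of_pos hNinv, ← ENNReal.ofReal_div_of_pos hpluspos]
  apply ENNReal.ofReal_le_ofReal
  rw [div_le_div_iff₀ hNinv hpluspos]
  calc y i₀ / s * mplus y i₀ ≤ y i₀ / s * (s / N) :=
        mul_le_mul_of_nonneg_left hm0 (by positivity)
    _ = y i₀ * (1 / N) := by
        field_simp
  
end Term

lemma tstar_le_smax (N : ℕ) (hN : 1 ≤ N) (y : ℤ → ℝ) (hy0 : ∀ i, 0 ≤ y i)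
    (hyper : ∀ i, y (i + (N:ℤ)) = y i) (hyne : ∃ i, y i ≠ 0) :
    Tstar N (1 / (N:ℝ)) ≤ SmaxE N y := by
  have hNR : (0:ℝ) < (N:ℝ) := by exact_mod_cast hN
  set s : ℝ := ∑ i ∈ Finset.Ioc (0:ℤ) (N:ℤ), y i with hs
  have hwin : ∀ a : ℤ, ∑ i ∈ Finset.Ioc a (a + (N:ℤ)), y i = s := by
    intro a; rw [hs]; exact window_sum y N hyper a
  have hred : ∀ t : ℤ, ∃ j : ℤ, 0 < j ∧ j ≤ (N:ℤ) ∧ y t = y j := by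
    intro t
    have hNne : (N:ℤ) ≠ 0 := by omega
    refine ⟨(t - 1) % (N:ℤ) + 1, by have := Int.emod_nonneg (t-1) hNne; omega,
      by have := Int.emod_lt_of_pos (t-1) (by omega : (0:ℤ) < N); omega, ?_⟩
    have h2 := Int.mul_ediv_add_emod (t-1) (N:ℤ)
    have e : (t - 1) % (N:ℤ) + 1 + ((t-1) / (N:ℤ)) * (N:ℤ) = t := by linear_combination h2
    have h3 := per_mul y N hyper ((t-1) / (N:ℤ)) ((t-1) % (N:ℤ) + 1)
    rw [e] at h3
    exact h3
  have spos : 0 < s := by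
    obtain ⟨i₁, hi₁⟩ := hyne
    obtain ⟨j, hj0, hjN, hjeq⟩ := hred i₁
    have hyj : 0 < y j := by
      rcases eq_or_lt_of_le (hy0 j) with h | h
      · exact absurd (hjeq.trans h.symm) hi₁
      · exact h
    have hjm : j ∈ Finset.Ioc (0:ℤ) (N:ℤ) := Finset.mem_Ioc.mpr ⟨hj0, hjN⟩
    rw [hs]
    exact lt_of_lt_of_le hyj (Finset.single_le_sum (fun t _ => hy0 t) hjm)
  have hyC : ∀ t, y t ≤ s := by
    intro t
    obtain ⟨j, hj0, hjN, hjeq⟩ := hred t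
    rw [hjeq, hs]
    exact Finset.single_le_sum (fun u _ => hy0 u) (Finset.mem_Ioc.mpr ⟨hj0, hjN⟩)
  obtain ⟨i₀, hi01, hi02, P1, P2⟩ := exists_good_cut N y hN hyper
  rw [← hs] at P1 P2
  clear_value s
  set z : ℤ → ℝ := fun t => if 1 - (N:ℤ) ≤ t ∧ t ≤ 0 then y (i₀ + t) / s else 0 with hzd
  have hzdef : ∀ t : ℤ, 1 - (N:ℤ) ≤ t → t ≤ 0 → z t = y (i₀ + t) / s := by
    intro t h1 h2
    simp only [hzd]
    rw [if_pos ⟨h1, h2⟩]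
  have hzzero : ∀ t : ℤ, (t ≤ -(N:ℤ) ∨ 0 < t) → z t = 0 := by
    intro t ht
    simp only [hzd]
    rw [if_neg (by omega)]
  have hz0 : ∀ t, 0 ≤ z t := by
    intro t
    simp only [hzd]
    split_ifs
    · exact div_nonneg (hy0 _) spos.le
    · exact le_rfl
  have hzsum : ∑ i ∈ Finset.Icc (1 - (N:ℤ)) 0, z i = 1 := by
    rw [show (1:ℤ) - (N:ℤ) = -(N:ℤ) + 1 by ring, IccZ_succ_left]
    rw [zsum_shift N y s i₀ z hN spos hzdef (-(N:ℤ)) 0 (by omega) le_rfl (by omega)]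
    have := hwin (i₀ - (N:ℤ))
    rw [show i₀ - (N:ℤ) + (N:ℤ) = i₀ + 0 by ring] at this
    rw [show i₀ + -(N:ℤ) = i₀ - (N:ℤ) by ring, this]
    exact div_self (ne_of_gt spos)
  have hzmem : z ∈ Delta N :=
    ⟨hz0, fun i hi => hzzero i (Or.inl hi), fun i hi => hzzero i (Or.inr hi), hzsum⟩
  refine (sInf_le ⟨z, hzmem, rfl⟩ :
    Tstar N (1 / (N:ℝ)) ≤ Tval z (1 / (N:ℝ))).trans ?_
  -- Tval as a finite sum
  have htsum : (∑' i : {w : ℤ // w ≤ -1}, ENNReal.ofReal (z i) / ENNReal.ofReal (mNeg z i))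
      = ∑ j ∈ Finset.Ioc (-(N:ℤ)) (-1),
          ENNReal.ofReal (z j) / ENNReal.ofReal (mNeg z j) := by
    rw [tsum_eq_sum (s := (Finset.Ioc (-(N:ℤ)) (-1)).subtype (fun w => w ≤ -1))
      (by
        rintro ⟨b, hb⟩ hbs
        have hble : b ≤ -(N:ℤ) := by
          simp only [Finset.mem_subtype, Finset.mem_Ioc] at hbs
          omega
        rw [hzzero b (Or.inl hble)]
        simp)]
    exact Finset.sum_subtype_of_mem
      (fun i => ENNReal.ofReal (z i) / ENNReal.ofReal (mNeg z i))
      (fun t ht => (Finset.mem_Ioc.mp ht).2)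
  rw [Tval, htsum]
  -- SmaxE as a shifted window sum
  have hHper : ∀ i : ℤ, (fun i => ENNReal.ofReal (y i) / ENNReal.ofReal (mplus y i)) (i + (N:ℤ))
      = (fun i => ENNReal.ofReal (y i) / ENNReal.ofReal (mplus y i)) i := by
    intro i
    simp only [hyper i, mplus_per y N hyper i]
  have hsm : SmaxE N y = ∑ j ∈ Finset.Ioc (-(N:ℤ)) (-1),
      (ENNReal.ofReal (y (i₀ + j)) / ENNReal.ofReal (mplus y (i₀ + j)))
      + ENNReal.ofReal (y i₀) / ENNReal.ofReal (mplus y i₀) := by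
    set H : ℤ → ℝ≥0∞ := fun i => ENNReal.ofReal (y i) / ENNReal.ofReal (mplus y i) with hH
    have h1 : SmaxE N y = ∑ i ∈ Finset.Ioc (0:ℤ) (N:ℤ), H i := by
      rw [SmaxE, show (1:ℤ) = 0 + 1 from rfl, IccZ_succ_left]
    have h2 := window_sum H N hHper (i₀ - (N:ℤ))
    rw [show i₀ - (N:ℤ) + (N:ℤ) = i₀ by ring] at h2
    have h3 : ∑ i ∈ Finset.Ioc (i₀ - (N:ℤ)) i₀, H i
        = ∑ j ∈ Finset.Ioc (-(N:ℤ)) 0, H (i₀ + j) := by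
      have hsh := sum_shiftZ H (-(N:ℤ)) 0 i₀
      rw [show -(N:ℤ) + i₀ = i₀ - (N:ℤ) by ring, zero_add] at hsh
      rw [hsh]
      exact Finset.sum_congr rfl (fun t _ => by rw [add_comm t i₀])
    have h4 : ∑ j ∈ Finset.Ioc (-(N:ℤ)) 0, H (i₀ + j)
        = ∑ j ∈ Finset.Ioc (-(N:ℤ)) (-1), H (i₀ + j) + H (i₀ + 0) := by
      rw [← sum_IocZ (fun j => H (i₀ + j)) (a := -(N:ℤ)) (b := -1) (c := 0) (by omega) (by omega)]
      congr 1
      rw [show (0:ℤ) = -1 + 1 from rfl, IocZ_singleton, Finset.sum_singleton]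
    rw [h1, ← h2, h3, h4, show i₀ + (0:ℤ) = i₀ by ring]
  rw [hsm]
  apply add_le_add
  · apply Finset.sum_le_sum
    intro j hj
    simp only [Finset.mem_Ioc] at hj
    exact term_neg N y s i₀ z hN hy0 spos hyC hwin hzdef P1 P2 j (by omega) (by omega)
  · exact term_zero N y s i₀ z hN hy0 spos hyC hwin
      (by rw [hzdef 0 (by omega) le_rfl, show i₀ + (0:ℤ) = i₀ by ring]) P2

/-- If some `(N,1/N)`-minimizer `x ∈ Δ_N` satisfies
(i) `x_k ≥ x_{k+1} ≥ … ≥ x_0 ≥ 1/N` for some `k ∈ [2−N : 0]`, and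
(ii) `x_{1−N} = … = x_{k−2} = 0` in case `k ≥ 3−N`,
then `Φ_N = T_N*(1/N)`. -/
theorem Phi_eq_Tstar_of_structured_minimizer (N : ℕ) (hN : 1 ≤ N)
    (x : ℤ → ℝ) (hx : x ∈ Delta N)
    (hmin : Tval x (1 / (N : ℝ)) = Tstar N (1 / (N : ℝ)))
    (k : ℤ) (hk1 : 2 - (N : ℤ) ≤ k) (hk2 : k ≤ 0)
    (hmono : ∀ i : ℤ, k ≤ i → i ≤ -1 → x (i + 1) ≤ x i)
    (hlast : 1 / (N : ℝ) ≤ x 0)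
    (hzero : 3 - (N : ℤ) ≤ k → ∀ i : ℤ, 1 - (N : ℤ) ≤ i → i ≤ k - 2 → x i = 0) :
    PhiE N = Tstar N (1 / (N : ℝ)) := by
  apply le_antisymm
  · apply le_sInf
    rintro t ⟨x', hx', rfl⟩
    exact phi_le_tval hN hx'
  · apply le_sInf
    rintro t ⟨y, hy0, hyper, hyne, rfl⟩
    exact tstar_le_smax N hN y hy0 hyper hyne
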